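/- Let r ≥ 1, let γ ∈ Δ(r) be spanned by v_{j_1}, …, v_{j_r}, let σ ∈ Δ(n) be an n-dimensional cone containing γ as a face whose edges are generated by v_{j_1}, …, v_{j_n}, and let u ∈ M be the element of the ℤ-basis of M dual to v_{j_1}, …, v_{j_n} characterized by ⟨u, v_{j_k}⟩ = δ_{1,k} for 1 ≤ k ≤ n. Then in R one has x_{j_1}·x(γ) = −Σ_k ⟨u, v_k⟩ x(γ_k) + r_u·x(γ), where the sum runs over those indices k ∈ {1,…,d} with k ∉ {j_1, …, j_n} for which v_k, v_{j_1}, …, v_{j_r} span a cone γ_k ∈ Δ(r+1), and where r_u = Σ_{1≤i≤n} a_i r_i for u = Σ_{1≤i≤n} a_i u_i. -/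

import Mathlib

open scoped Classical

noncomputable section

namespace SU

/-- The closed real cone spanned by the vectors `v j`, `j ∈ F`. -/
def realCone {n d : ℕ} (v : Fin d → Fin n → ℤ) (F : Finset (Fin d)) : Set (Fin n → ℝ) :=
  {x | ∃ c : Fin d → ℝ, (∀ j, 0 ≤ c j) ∧ (∀ j, j ∉ F → c j = 0) ∧
    x = ∑ j, c j • fun i => (v j i : ℝ)}

/-- A complete nonsingular fan in `N = ℤ^n`, recorded combinatorially.  Since the
cones of a nonsingular fan are simplicial, every cone is determined by the set of
its edges; `isCone F` says that the primitive vectors `v j`, `j ∈ F`, span a cone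
of the fan `Δ`.  Faces correspond to subsets, and the dimension of a cone is the
cardinality of its edge set. -/
structure Fan (n d : ℕ) where
  /-- the primitive generators of the `d` edges (1-dimensional cones) of the fan -/
  v : Fin d → Fin n → ℤ
  v_inj : Function.Injective v
  /-- `isCone F` : the `v j`, `j ∈ F`, span a cone of the fan -/
  isCone : Finset (Fin d) → Prop
  isCone_empty : isCone ∅
  isCone_singleton : ∀ j, isCone {j}
  /-- the fan is closed under taking faces -/
  isCone_mono : ∀ {F G}, isCone F → G ⊆ F → isCone G
  /-- any two cones meet along a common face -/
  isCone_inter : ∀ {F G}, isCone F → isCone G → isCone (F ∩ G)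
  realCone_inter : ∀ {F G}, isCone F → isCone G →
    realCone v F ∩ realCone v G = realCone v (F ∩ G)
  /-- the fan is complete : the union of its cones is all of `N ⊗ ℝ` -/
  complete : ∀ x : Fin n → ℝ, ∃ F, isCone F ∧ x ∈ realCone v F
  /-- nonsingularity : the generators of each cone form part of a `ℤ`-basis of `N` -/
  unimodular : ∀ {F}, isCone F → ∃ (b : Module.Basis (Fin n) ℤ (Fin n → ℤ))
    (ι : Fin d → Fin n), Set.InjOn ι ↑F ∧ ∀ j ∈ F, b (ι j) = v j

/-- An enumeration `σ 0, …, σ (m-1)` of the `n`-dimensional cones of the fan. -/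
structure MaxOrder {n d : ℕ} (Δ : Fan n d) (m : ℕ) where
  σ : Fin m → Finset (Fin d)
  isCone_σ : ∀ i, Δ.isCone (σ i)
  card_σ : ∀ i, (σ i).card = n
  σ_inj : Function.Injective σ
  σ_surj : ∀ F, Δ.isCone F → F.card = n → ∃ i, σ i = F

/-- `τ i` : the intersection of `σ i` with those cones `σ k`, `k > i`, with
`dim (σ i ∩ σ k) = n - 1`. -/
def MaxOrder.tau {n d m : ℕ} {Δ : Fan n d} (o : MaxOrder Δ m) (i : Fin m) :
    Finset (Fin d) :=
  (o.σ i).filter fun j => ∀ k, i < k → ((o.σ i) ∩ (o.σ k)).card = n - 1 → j ∈ o.σ k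

/-- Property (*) : `τ i` a face of `σ j` implies `i ≤ j`. -/
def MaxOrder.Star {n d m : ℕ} {Δ : Fan n d} (o : MaxOrder Δ m) : Prop :=
  ∀ i j, o.tau i ⊆ o.σ j → i ≤ j

/-- the set `{1, …, n} ⊆ {1, …, d}` of the first `n` edges -/
def firstn {n d : ℕ} (hnd : n ≤ d) : Finset (Fin d) :=
  Finset.univ.map ⟨Fin.castLE hnd, Fin.castLE_injective hnd⟩

variable {n d : ℕ} (S : Type*) [Ring S]

/-- The polynomial algebra over a (possibly noncommutative) ring `S` in `d`
central, pairwise commuting, variables. -/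
abbrev Poly (S : Type*) [Ring S] (d : ℕ) : Type _ := AddMonoidAlgebra S (Fin d →₀ ℕ)

/-- the variable `x j` -/
def X (j : Fin d) : Poly S d := AddMonoidAlgebra.single (Finsupp.single j 1) 1

/-- the scalar `s ∈ S` as a polynomial -/
def Cc (s : S) : Poly S d := AddMonoidAlgebra.single 0 s

/-- The square-free monomial `∏_{j ∈ F} x j`. -/
def mon (F : Finset (Fin d)) : Poly S d :=
  AddMonoidAlgebra.single (∑ j ∈ F, Finsupp.single j 1) 1

lemma commute_X (j k : Fin d) : Commute (X S j) (X S k) := by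
  show X S j * X S k = X S k * X S j
  simp only [X]
  rw [AddMonoidAlgebra.single_mul_single, AddMonoidAlgebra.single_mul_single, add_comm]

lemma commute_one_sub_X_pow (j k : Fin d) (a b : ℕ) :
    Commute ((1 - X S j) ^ a) ((1 - X S k) ^ b) :=
  ((Commute.one_left (1 - X S k)).sub_left
    ((Commute.one_right (X S j)).sub_right (commute_X S j k))).pow_pow a b

/-- the relation (on the polynomial ring) identifying every member of `gens`
with `0`; the corresponding `RingQuot` is the quotient by the two-sided ideal
generated by `gens`. -/
def relOf (gens : Set (Poly S d)) : Poly S d → Poly S d → Prop :=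
  fun p q => p ∈ gens ∧ q = 0

/-- type (i) generators : the monomials `x_{j₁} ⋯ x_{j_k}` (distinct indices)
such that `v_{j₁}, …, v_{j_k}` do not span a cone of `Δ`. -/
def gensCone (Δ : Fan n d) : Set (Poly S d) :=
  {p | ∃ F : Finset (Fin d), ¬ Δ.isCone F ∧ p = mon S F}

/-- type (ii) generators : the elements `y i = ∑_j ⟨u i, v j⟩ x j - r i`. -/
def gensLin (Δ : Fan n d) (uu : Fin n → ((Fin n → ℤ) →ₗ[ℤ] ℤ)) (r : Fin n → S) :
    Set (Poly S d) :=
  {p | ∃ i : Fin n, p = (∑ j, (uu i (Δ.v j)) • X S j) - Cc S (r i)}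

/-- the generators of the ideal `I_S` -/
def gensI (Δ : Fan n d) (uu : Fin n → ((Fin n → ℤ) →ₗ[ℤ] ℤ)) (r : Fin n → S) :
    Set (Poly S d) :=
  gensCone S Δ ∪ gensLin S Δ uu r

/-- the ring `R = S[x₁,…,x_d]/I_S` -/
abbrev RRing (Δ : Fan n d) (uu : Fin n → ((Fin n → ℤ) →ₗ[ℤ] ℤ)) (r : Fin n → S) :
    Type _ :=
  RingQuot (relOf S (gensI S Δ uu r))

/-- the quotient map `S[x₁,…,x_d] → R` -/
def mkR (Δ : Fan n d) (uu : Fin n → ((Fin n → ℤ) →ₗ[ℤ] ℤ)) (r : Fin n → S) :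
    Poly S d →+* RRing S Δ uu r :=
  RingQuot.mkRingHom _

/-- `∏_{j : ⟨u, v j⟩ > 0} (1 - x j) ^ ⟨u, v j⟩` -/
def zPos (Δ : Fan n d) (u : (Fin n → ℤ) →ₗ[ℤ] ℤ) : Poly S d :=
  Finset.univ.noncommProd (fun j => (1 - X S j) ^ (u (Δ.v j)).toNat)
    (fun j _ k _ _ => commute_one_sub_X_pow S j k _ _)

/-- `∏_{j : ⟨u, v j⟩ < 0} (1 - x j) ^ (-⟨u, v j⟩)` -/
def zNeg (Δ : Fan n d) (u : (Fin n → ℤ) →ₗ[ℤ] ℤ) : Poly S d :=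
  Finset.univ.noncommProd (fun j => (1 - X S j) ^ (-(u (Δ.v j))).toNat)
    (fun j _ k _ _ => commute_one_sub_X_pow S j k _ _)

lemma central_commute (ru : Fin n → Sˣ)
    (hcen : ∀ i, (ru i : S) ∈ Subring.center S) (i k : Fin n) :
    Commute (ru i) (ru k) := by
  show ru i * ru k = ru k * ru i
  exact Units.ext (by simpa using (Subring.mem_center_iff.mp (hcen i) (ru k)).symm)

/-- `r(u) = ∏_i r i ^ a i` for `u = ∑ a i • u i`, the `r i` being invertible. -/
def rOf (ru : Fin n → Sˣ) (hc : ∀ i k, Commute (ru i) (ru k)) (a : Fin n → ℤ) : S :=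
  (Finset.univ.noncommProd (fun i => ru i ^ a i)
    (fun i _ k _ _ => (hc i k).zpow_zpow _ _) : Sˣ)

/-- type (ii′) generators : the elements `z(u)` for `u ∈ M` -/
def gensZ (Δ : Fan n d) (uu : Fin n → ((Fin n → ℤ) →ₗ[ℤ] ℤ)) (ru : Fin n → Sˣ)
    (hc : ∀ i k, Commute (ru i) (ru k)) : Set (Poly S d) :=
  {p | ∃ a : Fin n → ℤ, p = zPos S Δ (∑ i, a i • uu i) -
    Cc S (rOf S ru hc a) * zNeg S Δ (∑ i, a i • uu i)}

/-- the generators of the ideal `𝓘_S` -/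
def gensII (Δ : Fan n d) (uu : Fin n → ((Fin n → ℤ) →ₗ[ℤ] ℤ)) (ru : Fin n → Sˣ)
    (hc : ∀ i k, Commute (ru i) (ru k)) : Set (Poly S d) :=
  gensCone S Δ ∪ gensZ S Δ uu ru hc

/-- the ring `ℛ = S[x₁,…,x_d]/𝓘_S` -/
abbrev RcalRing (Δ : Fan n d) (uu : Fin n → ((Fin n → ℤ) →ₗ[ℤ] ℤ)) (ru : Fin n → Sˣ)
    (hc : ∀ i k, Commute (ru i) (ru k)) : Type _ :=
  RingQuot (relOf S (gensII S Δ uu ru hc))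

/-- the quotient map `S[x₁,…,x_d] → ℛ` -/
def mkRcal (Δ : Fan n d) (uu : Fin n → ((Fin n → ℤ) →ₗ[ℤ] ℤ)) (ru : Fin n → Sˣ)
    (hc : ∀ i k, Commute (ru i) (ru k)) : Poly S d →+* RcalRing S Δ uu ru hc :=
  RingQuot.mkRingHom _


lemma X_mul_mon {d : ℕ} (S : Type*) [Ring S] {j : Fin d} {F : Finset (Fin d)}
    (hj : j ∉ F) : X S j * mon S F = mon S (insert j F) := by
  rw [X, mon, mon, AddMonoidAlgebra.single_mul_single, one_mul, Finset.sum_insert hj]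

lemma mkR_eq_zero {n d : ℕ} (S : Type*) [Ring S] (Δ : Fan n d)
    (uu : Fin n → ((Fin n → ℤ) →ₗ[ℤ] ℤ)) (r : Fin n → S) {p : Poly S d}
    (hp : p ∈ gensI S Δ uu r) : mkR S Δ uu r p = 0 := by
  have := RingQuot.mkRingHom_rel (r := relOf S (gensI S Δ uu r)) (⟨hp, rfl⟩ :
    relOf S (gensI S Δ uu r) p 0)
  simpa [mkR] using this

lemma Cc_zsmul {d : ℕ} (S : Type*) [Ring S] (a : ℤ) (s : S) :
    Cc S (a • s) = a • (Cc S s : Poly S d) := by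
  exact (map_zsmul (AddMonoidAlgebra.singleAddHom (0 : Fin d →₀ ℕ) : S →+ Poly S d) a s)

theorem statement1 {n d m : ℕ} (hn : 1 ≤ n) (hnd : n ≤ d) (hm : 1 ≤ m)
    (Δ : Fan n d) (o : MaxOrder Δ m) (hstar : o.Star)
    (hlast : o.σ ⟨m - 1, by omega⟩ = firstn hnd)
    (S : Type*) [Ring S] (r : Fin n → S) (hr : ∀ i, r i ∈ Subring.center S)
    (uu : Fin n → ((Fin n → ℤ) →ₗ[ℤ] ℤ))
    (huu : ∀ i j : Fin n, uu i (Δ.v (Fin.castLE hnd j)) = if i = j then 1 else 0)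
    (rr : ℕ) (hrr1 : 1 ≤ rr) (hrrn : rr ≤ n)
    (e : Fin n → Fin d) (he : Function.Injective e)
    (hσ : Δ.isCone (Finset.univ.map ⟨e, he⟩))
    (γ : Finset (Fin d))
    (hγ : γ = (Finset.univ.filter (fun k : Fin n => (k : ℕ) < rr)).map ⟨e, he⟩)
    (u : (Fin n → ℤ) →ₗ[ℤ] ℤ)
    (hu : ∀ k : Fin n, u (Δ.v (e k)) = if (k : ℕ) = 0 then 1 else 0) :
    mkR S Δ uu r (X S (e ⟨0, hn⟩) * mon S γ) =
      -(∑ k ∈ Finset.univ.filter (fun k : Fin d =>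
          k ∉ Finset.univ.map (⟨e, he⟩ : Fin n ↪ Fin d) ∧ Δ.isCone (insert k γ)),
          (u (Δ.v k)) • mkR S Δ uu r (mon S (insert k γ)))
      + mkR S Δ uu r (Cc S (∑ i, (u (Δ.v (Fin.castLE hnd i))) • r i)) *
        mkR S Δ uu r (mon S γ) := by
  classical
  set Em : Finset (Fin d) := Finset.univ.map ⟨e, he⟩ with hEm
  have hγsub : γ ⊆ Em := by
    rw [hγ, hEm]; exact Finset.map_subset_map.mpr (Finset.filter_subset _ _)
  have hfirst : Δ.isCone (firstn hnd) := hlast ▸ o.isCone_σ _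
  -- Step 1 : u = ∑ aᵢ • uuᵢ on all the v j
  have key : ∀ j : Fin d, u (Δ.v j) =
      ∑ i, (u (Δ.v (Fin.castLE hnd i))) * uu i (Δ.v j) := by
    obtain ⟨b, ι, hinj, hb⟩ := Δ.unimodular hfirst
    have hcard : (firstn hnd).card = n := by simp [firstn]
    have himg : (firstn hnd).image ι = Finset.univ := by
      apply Finset.eq_univ_of_card
      simp [Finset.card_image_of_injOn hinj, hcard]
    have hLeq : u = ∑ i, (u (Δ.v (Fin.castLE hnd i))) • uu i := by
      apply b.ext
      intro i
      have hi : i ∈ (firstn hnd).image ι := by rw [himg]; exact Finset.mem_univ i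
      obtain ⟨j, hj, hij⟩ := Finset.mem_image.mp hi
      obtain ⟨k, -, hk⟩ := Finset.mem_map.mp hj
      have hk' : Fin.castLE hnd k = j := hk
      rw [← hij, hb j hj, ← hk']
      simp [LinearMap.sum_apply, LinearMap.smul_apply, huu, smul_eq_mul,
        mul_ite, mul_one, mul_zero]
    intro j
    have := LinearMap.congr_fun hLeq (Δ.v j)
    simpa [LinearMap.sum_apply, LinearMap.smul_apply, smul_eq_mul] using this
  -- Step 2 : the linear relations in R
  have rel_i : ∀ i : Fin n, mkR S Δ uu r (∑ j, (uu i (Δ.v j)) • X S j)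
      = mkR S Δ uu r (Cc S (r i)) := by
    intro i
    have h0 : mkR S Δ uu r ((∑ j, (uu i (Δ.v j)) • X S j) - Cc S (r i)) = 0 :=
      mkR_eq_zero S Δ uu r (Set.mem_union_right _ ⟨i, rfl⟩)
    rw [map_sub, sub_eq_zero] at h0
    exact h0
  -- Step 3 : the combined relation for u
  have relu : mkR S Δ uu r (∑ j, (u (Δ.v j)) • X S j) =
      mkR S Δ uu r (Cc S (∑ i, (u (Δ.v (Fin.castLE hnd i))) • r i)) := by
    have h1 : (∑ i, (u (Δ.v (Fin.castLE hnd i))) • ∑ j, (uu i (Δ.v j)) • X S j)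
        = ∑ j, (u (Δ.v j)) • X S j := by
      simp only [Finset.smul_sum, smul_smul]
      rw [Finset.sum_comm]
      refine Finset.sum_congr rfl fun j _ => ?_
      rw [key j, Finset.sum_smul]
    calc mkR S Δ uu r (∑ j, (u (Δ.v j)) • X S j)
        = ∑ i, (u (Δ.v (Fin.castLE hnd i))) •
            mkR S Δ uu r (∑ j, (uu i (Δ.v j)) • X S j) := by
          rw [← h1, map_sum]
          exact Finset.sum_congr rfl fun i _ => (map_zsmul _ _ _)
      _ = ∑ i, (u (Δ.v (Fin.castLE hnd i))) • mkR S Δ uu r (Cc S (r i)) := by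
          exact Finset.sum_congr rfl fun i _ => by rw [rel_i i]
      _ = mkR S Δ uu r (Cc S (∑ i, (u (Δ.v (Fin.castLE hnd i))) • r i)) := by
          rw [show (Cc S (∑ i, (u (Δ.v (Fin.castLE hnd i))) • r i) : Poly S d)
              = ∑ i, (u (Δ.v (Fin.castLE hnd i))) • Cc S (r i) by
            rw [← Finset.sum_congr rfl fun i _ => Cc_zsmul S _ (r i)]
            exact map_sum (AddMonoidAlgebra.singleAddHom (0 : Fin d →₀ ℕ) : S →+ Poly S d) _ _]
          rw [map_sum]
          exact Finset.sum_congr rfl fun i _ => (map_zsmul _ _ _).symm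
  -- multiply on the right by mon γ
  have hsum : ∑ j, (u (Δ.v j)) • mkR S Δ uu r (X S j * mon S γ)
      = mkR S Δ uu r (Cc S (∑ i, (u (Δ.v (Fin.castLE hnd i))) • r i)) *
        mkR S Δ uu r (mon S γ) := by
    have haux : ∑ j, (u (Δ.v j)) • mkR S Δ uu r (X S j * mon S γ)
        = mkR S Δ uu r (∑ j, (u (Δ.v j)) • X S j) * mkR S Δ uu r (mon S γ) := by
      rw [← map_mul, Finset.sum_mul, map_sum]
      exact Finset.sum_congr rfl fun j _ => by rw [smul_mul_assoc, map_zsmul]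
    rw [haux, relu]
  -- split the sum
  have hEmpart : ∑ j ∈ Em, (u (Δ.v j)) • mkR S Δ uu r (X S j * mon S γ)
      = mkR S Δ uu r (X S (e ⟨0, hn⟩) * mon S γ) := by
    rw [hEm, Finset.sum_map]
    simp only [Function.Embedding.coeFn_mk, hu]
    rw [Finset.sum_eq_single (⟨0, hn⟩ : Fin n)]
    · simp
    · intro b _ hb
      have : (b : ℕ) ≠ 0 := fun h => hb (Fin.ext h)
      simp [this]
    · intro h; exact absurd (Finset.mem_univ _) h
  have hXin : ∀ j : Fin d, j ∉ Em → X S j * mon S γ = mon S (insert j γ) := by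
    intro j hj
    exact X_mul_mon S (fun hjγ => hj (hγsub hjγ))
  have hrest : ∑ j ∈ Finset.univ.filter (fun j : Fin d => j ∉ Em),
        (u (Δ.v j)) • mkR S Δ uu r (X S j * mon S γ)
      = ∑ k ∈ Finset.univ.filter (fun k : Fin d =>
          k ∉ Finset.univ.map (⟨e, he⟩ : Fin n ↪ Fin d) ∧ Δ.isCone (insert k γ)),
          (u (Δ.v k)) • mkR S Δ uu r (mon S (insert k γ)) := by
    have hAB : Finset.univ.filter (fun k : Fin d =>
          k ∉ Finset.univ.map (⟨e, he⟩ : Fin n ↪ Fin d) ∧ Δ.isCone (insert k γ))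
        ⊆ Finset.univ.filter (fun j : Fin d => j ∉ Em) := fun j hj =>
      Finset.mem_filter.mpr ⟨Finset.mem_univ _, (Finset.mem_filter.mp hj).2.1⟩
    rw [← Finset.sum_subset hAB]
    · refine Finset.sum_congr rfl fun j hj => ?_
      rw [hXin j (Finset.mem_filter.mp hj).2.1]
    · intro j hj hj2
      have h1 : j ∉ Em := (Finset.mem_filter.mp hj).2
      have h2 : ¬ Δ.isCone (insert j γ) := by
        intro hc
        exact hj2 (Finset.mem_filter.mpr ⟨Finset.mem_univ _, h1, hc⟩)
      rw [hXin j h1, mkR_eq_zero S Δ uu r (Set.mem_union_left _ ⟨insert j γ, h2, rfl⟩)]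
      simp
  have hsplit : ∑ j ∈ Em, (u (Δ.v j)) • mkR S Δ uu r (X S j * mon S γ)
      + ∑ j ∈ Finset.univ.filter (fun j : Fin d => j ∉ Em),
        (u (Δ.v j)) • mkR S Δ uu r (X S j * mon S γ)
      = ∑ j, (u (Δ.v j)) • mkR S Δ uu r (X S j * mon S γ) := by
    have hfe : Finset.univ.filter (fun j : Fin d => j ∈ Em) = Em := by
      ext j; simp
    have h := Finset.sum_filter_add_sum_filter_not Finset.univ (fun j : Fin d => j ∈ Em)
      (fun j => (u (Δ.v j)) • mkR S Δ uu r (X S j * mon S γ))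
    rw [hfe] at h
    exact h
  have final := hsplit.trans hsum
  rw [hEmpart, hrest] at final
  rw [eq_neg_add_iff_add_eq, add_comm]
  exact final

end SU
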